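/- Assume ρ < 1 and let δ ∈ ℂ with 0 < |δ| ≤ ρ²/2. Then the kernel equation, regarded as a quadratic polynomial equation in γ, has exactly one root γ (counted with multiplicity) with |γ| < (4/5)|δ|, and that root is nonzero. -/

import Mathlib

/-- The load ρ = λ(ā²+a²)/(2λ̄āa). -/
noncomputable def rhoLoad (a lam : ℝ) : ℝ :=
  lam * ((1-a)^2 + a^2) / (2 * (1-lam) * (1-a) * a)

open Polynomial in
/-- The kernel equation as a quadratic polynomial in γ (for fixed δ). -/
noncomputable def kernelQuadG (a lam : ℝ) (d : ℂ) : Polynomial ℂ :=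
  C ((1-(lam:ℂ))*(1-(a:ℂ))*(a:ℂ)) * X^2
  + C ((1-(lam:ℂ))*(1-(a:ℂ))*(a:ℂ)*d^2
      - (1 - ((1-(lam:ℂ))*((1-(a:ℂ))^2+(a:ℂ)^2) + (lam:ℂ)*(a:ℂ)*(1-(a:ℂ)))) * d) * X
  + C ((lam:ℂ)*((a:ℂ)^2+(1-(a:ℂ))^2)*d^2 + (lam:ℂ)*(1-(a:ℂ))*(a:ℂ)*d^3)

/-! By Vieta, the roots `u, v` of `A γ² + B γ + C` satisfy `A (u + v) = -B` and `A u v = C`, so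
`‖A‖ r² + ‖C‖ < ‖B‖ r` forces `(r - ‖u‖) (r - ‖v‖) < 0`: exactly one root lies in the open disc
of radius `r`. For the kernel, `|δ| ≤ ρ²/2 < 1/2`, and with `r = (4/5)|δ|` this domination of the
linear coefficient reduces, after division by `|δ|²`, to an inequality in `a, λ` that follows from
`ρ < 1`. The small root is nonzero because the constant term is `δ² (S + T δ)` with `T |δ| < S`. -/

open Polynomial

section Quadratic

variable {K : Type*}

theorem Polynomial.exists_roots_quadratic_eq_pair [Field K] [IsAlgClosed K] {a b c : K}
    (ha : a ≠ 0) : ∃ x₁ x₂, (C a * X ^ 2 + C b * X + C c).roots = {x₁, x₂} := by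
  refine Multiset.card_eq_two.mp ?_
  rw [← (IsAlgClosed.splits _).natDegree_eq_card_roots, natDegree_quadratic ha]

variable [NormedField K]

theorem xor_norm_lt_of_vieta {a x₁ x₂ : K} {r : ℝ}
    (h : ‖a‖ * r ^ 2 + ‖a * x₁ * x₂‖ < ‖-a * (x₁ + x₂)‖ * r) : Xor (‖x₁‖ < r) (‖x₂‖ < r) := by
  rw [norm_mul, norm_mul, norm_mul, norm_neg] at h
  have hsum : ‖x₁ + x₂‖ ≤ ‖x₁‖ + ‖x₂‖ := norm_add_le x₁ x₂
  have hlhs : 0 ≤ ‖a‖ * r ^ 2 + ‖a‖ * ‖x₁‖ * ‖x₂‖ := by positivity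
  have hr : 0 < r := by
    by_contra! hr
    exact (mul_nonpos_of_nonneg_of_nonpos (by positivity) hr).not_gt (hlhs.trans_lt h)
  have ha : 0 < ‖a‖ := by
    by_contra! ha
    simp [le_antisymm ha (norm_nonneg a)] at h
  have hprod : (r - ‖x₁‖) * (r - ‖x₂‖) < 0 := by
    have : ‖a‖ * (r ^ 2 + ‖x₁‖ * ‖x₂‖) < ‖a‖ * ((‖x₁‖ + ‖x₂‖) * r) := by
      nlinarith [mul_le_mul_of_nonneg_left hsum ha.le]
    nlinarith [(mul_lt_mul_iff_right₀ ha).mp this]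
  rcases lt_or_ge ‖x₁‖ r with h₁ | h₁ <;> rcases lt_or_ge ‖x₂‖ r with h₂ | h₂
  · nlinarith
  · exact Or.inl ⟨h₁, h₂.not_gt⟩
  · exact Or.inr ⟨h₂, h₁.not_gt⟩
  · nlinarith

theorem Polynomial.card_filter_norm_lt_roots_quadratic_eq_one [IsAlgClosed K] {a b c : K} {r : ℝ}
    (ha : a ≠ 0) (h : ‖a‖ * r ^ 2 + ‖c‖ < ‖b‖ * r) :
    ((C a * X ^ 2 + C b * X + C c).roots.filter (fun z => ‖z‖ < r)).card = 1 := by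
  obtain ⟨x₁, x₂, hroots⟩ := exists_roots_quadratic_eq_pair (b := b) (c := c) ha
  obtain ⟨hb, hc⟩ := (roots_quadratic_eq_pair_iff_of_ne_zero ha).mp hroots
  rw [hb, hc] at h
  rw [hroots, Multiset.insert_eq_cons, Multiset.filter_cons, Multiset.filter_singleton]
  rcases xor_norm_lt_of_vieta h with ⟨h₁, h₂⟩ | ⟨h₂, h₁⟩ <;> simp [h₁, h₂]

end Quadratic

theorem norm_quadratic_add_const_lt_linear {d : ℂ} (hd : d ≠ 0) {A M S T κ : ℝ}
    (hA : 0 ≤ A) (hS : 0 ≤ S) (hT : 0 ≤ T) (hκ : 0 ≤ κ)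
    (h : A * κ ^ 2 + S + T * ‖d‖ + A * ‖d‖ * κ < M * κ) :
    ‖(A : ℂ)‖ * (κ * ‖d‖) ^ 2 + ‖(S : ℂ) * d ^ 2 + T * d ^ 3‖
      < ‖(A : ℂ) * d ^ 2 - M * d‖ * (κ * ‖d‖) := by
  have hconst : ‖(S : ℂ) * d ^ 2 + T * d ^ 3‖ ≤ S * ‖d‖ ^ 2 + T * ‖d‖ ^ 3 := by
    have := norm_add_le ((S : ℂ) * d ^ 2) ((T : ℂ) * d ^ 3)
    rwa [norm_mul, norm_mul, norm_pow, norm_pow, Complex.norm_real, Complex.norm_real,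
      Real.norm_of_nonneg hS, Real.norm_of_nonneg hT] at this
  have hlin : M * ‖d‖ - A * ‖d‖ ^ 2 ≤ ‖(A : ℂ) * d ^ 2 - M * d‖ := by
    rw [norm_sub_rev]
    refine le_trans ?_ (norm_sub_norm_le _ _)
    simpa [abs_of_nonneg hA] using mul_le_mul_of_nonneg_right (le_abs_self M) (norm_nonneg d)
  have hd : 0 < ‖d‖ := norm_pos_iff.mpr hd
  rw [Complex.norm_real, Real.norm_eq_abs, abs_of_nonneg hA]
  calc A * (κ * ‖d‖) ^ 2 + ‖(S : ℂ) * d ^ 2 + T * d ^ 3‖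
      ≤ ‖d‖ ^ 2 * (A * κ ^ 2 + S + T * ‖d‖) := by linear_combination hconst
    _ < ‖d‖ ^ 2 * (M * κ - A * ‖d‖ * κ) := by gcongr; linarith
    _ = (M * ‖d‖ - A * ‖d‖ ^ 2) * (κ * ‖d‖) := by ring
    _ ≤ ‖(A : ℂ) * d ^ 2 - M * d‖ * (κ * ‖d‖) := by gcongr

theorem ofReal_mul_sq_add_mul_cube_ne_zero {d : ℂ} (hd : d ≠ 0) {S T : ℝ} (hT : 0 ≤ T)
    (h : T * ‖d‖ < S) : (S : ℂ) * d ^ 2 + T * d ^ 3 ≠ 0 := by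
  have hlin : (S : ℂ) + T * d ≠ 0 := by
    intro h0
    have := congrArg norm (eq_neg_of_add_eq_zero_left h0)
    rw [norm_neg, norm_mul, Complex.norm_real, Complex.norm_real, Real.norm_of_nonneg hT] at this
    linarith [le_abs_self S, Real.norm_eq_abs S]
  rw [show (S : ℂ) * d ^ 2 + T * d ^ 3 = d ^ 2 * (S + T * d) by ring]
  exact mul_ne_zero (pow_ne_zero 2 hd) hlin

theorem kernelQuadG_eq_ofReal (a lam : ℝ) (d : ℂ) :
    kernelQuadG a lam d =
      C (((1 - lam) * (1 - a) * a : ℝ) : ℂ) * X ^ 2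
      + C ((((1 - lam) * (1 - a) * a : ℝ) : ℂ) * d ^ 2
          - ((1 - ((1 - lam) * ((1 - a) ^ 2 + a ^ 2) + lam * a * (1 - a)) : ℝ) : ℂ) * d) * X
      + C (((lam * (a ^ 2 + (1 - a) ^ 2) : ℝ) : ℂ) * d ^ 2
          + ((lam * (1 - a) * a : ℝ) : ℂ) * d ^ 3) := by
  simp [kernelQuadG]

theorem kernel_linear_coeff_dominates {a lam s : ℝ} (ha : 0 < a) (ha1 : a < 1) (hl : 0 < lam)
    (hload : lam * ((1 - a) ^ 2 + a ^ 2) < 2 * (1 - lam) * (1 - a) * a)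
    (hs0 : 0 ≤ s) (hs : s < 1 / 2) :
    (1 - lam) * (1 - a) * a * (4 / 5) ^ 2 + lam * (a ^ 2 + (1 - a) ^ 2) + lam * (1 - a) * a * s
        + (1 - lam) * (1 - a) * a * s * (4 / 5)
      < (1 - ((1 - lam) * ((1 - a) ^ 2 + a ^ 2) + lam * a * (1 - a))) * (4 / 5) := by
  have ht : 0 < a * (1 - a) := mul_pos ha (by linarith)
  nlinarith [mul_nonneg ht.le hs0, mul_nonneg (mul_nonneg ht.le hs0) hl.le, mul_pos ht hl]

theorem kernel_const_coeff_dominates {a lam s : ℝ} (ha : 0 < a) (ha1 : a < 1) (hl : 0 < lam)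
    (hs : s < 1 / 2) : lam * (1 - a) * a * s < lam * (a ^ 2 + (1 - a) ^ 2) := by
  nlinarith [mul_nonneg hl.le (sq_nonneg (1 - 2 * a)),
    mul_nonneg (mul_nonneg hl.le (by linarith : (0:ℝ) ≤ 1 / 2 - s))
      (mul_nonneg (by linarith : (0:ℝ) ≤ 1 - a) ha.le)]

/-- assume ρ < 1 and 0 < |δ| ≤ ρ²/2. Then the kernel quadratic in γ
has exactly one root (with multiplicity) with |γ| < (4/5)|δ|, and it is nonzero. -/
theorem stmt9 (a lam : ℝ) (ha : 0 < a) (ha1 : a < 1) (hl : 0 < lam) (hl1 : lam < 1)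
    (hρ : rhoLoad a lam < 1)
    (d : ℂ) (hd0 : d ≠ 0) (hd1 : ‖d‖ ≤ (rhoLoad a lam)^2 / 2) :
    Multiset.card ((kernelQuadG a lam d).roots.filter
        (fun z => ‖z‖ < (4/5) * ‖d‖)) = 1 ∧
    ∀ z ∈ (kernelQuadG a lam d).roots, ‖z‖ < (4/5) * ‖d‖ → z ≠ 0 := by
  have ha' : 0 < 1 - a := by linarith
  have hl' : 0 < 1 - lam := by linarith
  have hden : 0 < 2 * (1 - lam) * (1 - a) * a := by positivity
  have hload : lam * ((1 - a) ^ 2 + a ^ 2) < 2 * (1 - lam) * (1 - a) * a :=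
    (div_lt_one hden).mp hρ
  have hs : ‖d‖ < 1 / 2 := by
    have hρ0 : 0 < rhoLoad a lam := div_pos (by positivity) hden
    nlinarith
  rw [kernelQuadG_eq_ofReal]
  refine ⟨card_filter_norm_lt_roots_quadratic_eq_one
    (Complex.ofReal_ne_zero.mpr (by positivity)) ?_, ?_⟩
  · exact norm_quadratic_add_const_lt_linear hd0 (by positivity) (by positivity) (by positivity)
      (by norm_num) (kernel_linear_coeff_dominates ha ha1 hl hload (norm_nonneg d) hs)
  · rintro z hz - rfl
    refine ofReal_mul_sq_add_mul_cube_ne_zero hd0 (by positivity)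
      (kernel_const_coeff_dominates ha ha1 hl hs) ?_
    simpa using isRoot_of_mem_roots hz
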